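/- Let F̄(p) = (6 − 8p + 7p² − 2p³)/6 be the average teleportation fidelity of the depolarized GHZ channel. Then F̄ is strictly decreasing on [0,1] with F̄(0) = 1 and F̄(1) = 1/2, and for every p ∈ [0,1] one has F̄(p) − 2/3 = (2 − 8p + 7p² − 2p³)/6; in particular F̄(p) > 2/3 if and only if 2 − 8p + 7p² − 2p³ > 0, i.e. if and only if the localizable concurrence expression max{0, (2 − 8p + 7p² − 2p³)/2} of the depolarized GHZ channel is positive. -/
import Mathlib


noncomputable section

/-- The average teleportation fidelity of the depolarized GHZ channel,
`F̄(p) = (6 − 8p + 7p² − 2p³)/6`. -/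
def avgFid (p : ℝ) : ℝ := (6 - 8 * p + 7 * p ^ 2 - 2 * p ^ 3) / 6

/-- `F̄` is strictly decreasing on `[0,1]` with `F̄(0) = 1`,
`F̄(1) = 1/2`, and `F̄(p) − 2/3 = (2 − 8p + 7p² − 2p³)/6` for `p ∈ [0,1]`;
hence `F̄(p) > 2/3` iff `2 − 8p + 7p² − 2p³ > 0`, iff the localizable
concurrence expression `max{0, (2 − 8p + 7p² − 2p³)/2}` is positive. -/
theorem avgFid_vs_localizable_concurrence :
    StrictAntiOn avgFid (Set.Icc 0 1) ∧
    avgFid 0 = 1 ∧ avgFid 1 = 1 / 2 ∧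
    (∀ p ∈ Set.Icc (0 : ℝ) 1,
      avgFid p - 2 / 3 = (2 - 8 * p + 7 * p ^ 2 - 2 * p ^ 3) / 6) ∧
    (∀ p ∈ Set.Icc (0 : ℝ) 1,
      (2 / 3 < avgFid p ↔ 0 < 2 - 8 * p + 7 * p ^ 2 - 2 * p ^ 3)) ∧
    (∀ p ∈ Set.Icc (0 : ℝ) 1,
      (2 / 3 < avgFid p ↔
        0 < max 0 ((2 - 8 * p + 7 * p ^ 2 - 2 * p ^ 3) / 2))) := by
  refine ⟨?_, by norm_num [avgFid], by norm_num [avgFid], ?_, ?_, ?_⟩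
  · intro a ha b hb hab
    have ha1 : a ≤ 1 := ha.2
    have hb1 : b ≤ 1 := hb.2
    have ha0 : 0 ≤ a := ha.1
    have ha1' : a < 1 := lt_of_lt_of_le hab hb1
    have hkey : 0 < 8 - 7 * (a + b) + 2 * (a ^ 2 + a * b + b ^ 2) := by
      nlinarith [mul_pos (by linarith : (0:ℝ) < 1 - a) (by linarith : (0:ℝ) < 3 - 2 * a),
        mul_nonneg (by linarith : (0:ℝ) ≤ 1 - a) (by linarith : (0:ℝ) ≤ 1 - b),
        sq_nonneg (1 - b)]
    simp only [avgFid]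
    nlinarith [mul_pos (sub_pos.2 hab) hkey]
  · intro p _; simp only [avgFid]; ring
  · intro p _; simp only [avgFid]; constructor <;> intro h <;> linarith
  · intro p _
    simp only [avgFid, lt_max_iff, lt_self_iff_false, false_or]
    constructor <;> intro h <;> linarith
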